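/- arXiv:1301.1076 — 5 statements merged into one kernel-verified Lean document; each statement's English description precedes it below -/
import Mathlib

section
/- Let G be a group and let ρ, φ : G → ℤ/2ℤ be group homomorphisms (to the additive group of the field 𝔽₂). Let K = ker(ρ) and let X²(K) be the subgroup of G generated by the squares of all elements of K; X²(K) is a normal subgroup of G, and ρ and φ induce homomorphisms ρ̄, φ̄ on the quotient Q = G/X²(K). Then there exists a function F : G → ℤ/2ℤ with ρ(g)φ(h) = F(gh) + F(g) + F(h) for all g, h ∈ G if and only if there exists a function F̄ : Q → ℤ/2ℤ with ρ̄(x)φ̄(y) = F̄(xy) + F̄(x) + F̄(y) for all x, y ∈ Q. -/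
/-- `X²(K)`: the subgroup generated by the squares of all elements of `K`. -/
def sqSubgroup {G : Type*} [Group G] (K : Subgroup G) : Subgroup G :=
  Subgroup.closure ((fun k => k ^ 2) '' (K : Set G))

/-- If `K` is normal in `G` then `X²(K)`, being characteristic in `K`, is normal in `G`. -/
instance sqSubgroup_normal {G : Type*} [Group G] (K : Subgroup G) [hK : K.Normal] :
    (sqSubgroup K).Normal := by
  constructor
  intro n hn g
  have h1 : (MulAut.conj g).toMonoidHom n ∈
      (sqSubgroup K).map (MulAut.conj g).toMonoidHom :=
    Subgroup.mem_map_of_mem _ hn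
  rw [sqSubgroup, MonoidHom.map_closure] at h1
  have h2 : Subgroup.closure ((MulAut.conj g).toMonoidHom ''
      ((fun k => k ^ 2) '' (K : Set G))) ≤ sqSubgroup K := by
    apply (Subgroup.closure_le _).mpr
    rintro _ ⟨_, ⟨k, hk, rfl⟩, rfl⟩
    apply Subgroup.subset_closure
    exact ⟨(MulAut.conj g) k, hK.conj_mem k hk g, (map_pow (MulAut.conj g) k 2).symm⟩
  simpa using h2 h1

/-! On `K = ker ρ` the coboundary equation reads `F (g * h) = F g + F h`, so `F` restricts to a
homomorphism `K → 𝔽₂`; it therefore vanishes on the squares of `K`, hence on `X²(K)`, and so does `φ`,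
which kills all squares. Then `F (g * n) = F g` for `n ∈ X²(K)`, so `F` descends to `G ⧸ X²(K)`.
The converse is pulling back along `G → G ⧸ X²(K)`. -/

/-- `F` witnesses that the cup product `ρφ ∈ H²(G; 𝔽₂)` vanishes. -/
def IsCupCoboundary {G : Type*} [Group G] (ρ φ : G →* Multiplicative (ZMod 2))
    (F : G → ZMod 2) : Prop :=
  ∀ g h : G, Multiplicative.toAdd (ρ g) * Multiplicative.toAdd (φ h) = F (g * h) + F g + F h

theorem sqSubgroup_le_ker {G M : Type*} [Group G] [Group M] (K : Subgroup G) (χ : G →* M)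
    (hM : ∀ m : M, m ^ 2 = 1) : sqSubgroup K ≤ χ.ker := by
  refine (Subgroup.closure_le _).mpr ?_
  rintro _ ⟨k, -, rfl⟩
  simp [map_pow, hM]

theorem sqSubgroup_le_map_ker {G M : Type*} [Group G] [Group M] (K : Subgroup G) (ψ : K →* M)
    (hM : ∀ m : M, m ^ 2 = 1) : sqSubgroup K ≤ ψ.ker.map K.subtype := by
  refine (Subgroup.closure_le _).mpr ?_
  rintro _ ⟨k, hk, rfl⟩
  exact ⟨⟨k, hk⟩ ^ 2, MonoidHom.mem_ker.mpr (by rw [map_pow, hM]), rfl⟩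

theorem multiplicative_zmod_two_sq_eq_one (m : Multiplicative (ZMod 2)) : m ^ 2 = 1 := by
  revert m; decide

namespace IsCupCoboundary

variable {G : Type*} [Group G] {ρ φ : G →* Multiplicative (ZMod 2)} {F : G → ZMod 2}

theorem map_mul_of_mem_ker (hF : IsCupCoboundary ρ φ F) {g : G} (hg : g ∈ ρ.ker) (h : G) :
    F (g * h) = F g + F h := by
  have h := hF g h
  rw [MonoidHom.mem_ker.mp hg, toAdd_one, zero_mul] at h
  grind

def restrictKer (hF : IsCupCoboundary ρ φ F) : ρ.ker →* Multiplicative (ZMod 2) :=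
  MonoidHom.mk' (fun k => Multiplicative.ofAdd (F k)) fun k l => by
    simp [hF.map_mul_of_mem_ker k.2]

theorem eq_zero_of_mem_sqSubgroup (hF : IsCupCoboundary ρ φ F) {n : G}
    (hn : n ∈ sqSubgroup ρ.ker) : F n = 0 := by
  obtain ⟨k, hk, rfl⟩ :=
    sqSubgroup_le_map_ker ρ.ker hF.restrictKer multiplicative_zmod_two_sq_eq_one hn
  exact congrArg Multiplicative.toAdd hk

theorem comp {H : Type*} [Group H] {ρ φ : H →* Multiplicative (ZMod 2)} {F : H → ZMod 2}
    (hF : IsCupCoboundary ρ φ F) (π : G →* H) :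
    IsCupCoboundary (ρ.comp π) (φ.comp π) (F ∘ π) := fun g h => by
  simpa using hF (π g) (π h)

theorem apply_mul_of_mem (hF : IsCupCoboundary ρ φ F) {N : Subgroup G} (hφ : N ≤ φ.ker)
    (hFN : ∀ n ∈ N, F n = 0) (g : G) {n : G} (hn : n ∈ N) : F (g * n) = F g := by
  have h := hF g n
  rw [MonoidHom.mem_ker.mp (hφ hn), toAdd_one, mul_zero, hFN n hn] at h
  grind

theorem descend (hF : IsCupCoboundary ρ φ F) {N : Subgroup G} [N.Normal] (hφ : N ≤ φ.ker)
    (hFN : ∀ n ∈ N, F n = 0) (ρbar φbar : G ⧸ N →* Multiplicative (ZMod 2))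
    (hρbar : ∀ g : G, ρbar g = ρ g) (hφbar : ∀ g : G, φbar g = φ g) :
    ∃ Fbar : G ⧸ N → ZMod 2, IsCupCoboundary ρbar φbar Fbar := by
  refine ⟨Quotient.lift F fun a b hab => ?_, fun x y => ?_⟩
  · have hab : a⁻¹ * b ∈ N := QuotientGroup.leftRel_apply.mp hab
    rw [← hF.apply_mul_of_mem hφ hFN a hab, mul_inv_cancel_left]
  · induction x using QuotientGroup.induction_on
    induction y using QuotientGroup.induction_on
    rw [← QuotientGroup.mk_mul, hρbar, hφbar]
    exact hF _ _

end IsCupCoboundary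

/-- for homomorphisms `ρ, φ : G → ℤ/2ℤ`, with `K = ker ρ` and
`Q = G/X²(K)`, and `ρ̄, φ̄` the induced homomorphisms on `Q`, the 2-cocycle
`(g,h) ↦ ρ(g)φ(h)` is a coboundary on `G` iff the corresponding 2-cocycle
`(x,y) ↦ ρ̄(x)φ̄(y)` is a coboundary on `Q`. -/
theorem stmt2 (G : Type*) [Group G] (ρ φ : G →* Multiplicative (ZMod 2))
    (ρbar φbar : G ⧸ sqSubgroup ρ.ker →* Multiplicative (ZMod 2))
    (hρbar : ∀ g : G, ρbar (QuotientGroup.mk g) = ρ g)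
    (hφbar : ∀ g : G, φbar (QuotientGroup.mk g) = φ g) :
    (∃ F : G → ZMod 2, ∀ g h : G,
        Multiplicative.toAdd (ρ g) * Multiplicative.toAdd (φ h) = F (g * h) + F g + F h) ↔
    (∃ Fbar : G ⧸ sqSubgroup ρ.ker → ZMod 2, ∀ x y : G ⧸ sqSubgroup ρ.ker,
        Multiplicative.toAdd (ρbar x) * Multiplicative.toAdd (φbar y) =
          Fbar (x * y) + Fbar x + Fbar y) := by
  constructor
  · rintro ⟨F, hF : IsCupCoboundary ρ φ F⟩
    exact hF.descend (sqSubgroup_le_ker ρ.ker φ multiplicative_zmod_two_sq_eq_one)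
      (fun _ => hF.eq_zero_of_mem_sqSubgroup) ρbar φbar hρbar hφbar
  · rintro ⟨Fbar, hFbar : IsCupCoboundary ρbar φbar Fbar⟩
    have hρ : ρbar.comp (QuotientGroup.mk' _) = ρ := MonoidHom.ext hρbar
    have hφ : φbar.comp (QuotientGroup.mk' _) = φ := MonoidHom.ext hφbar
    exact ⟨_, hρ ▸ hφ ▸ hFbar.comp (QuotientGroup.mk' _)⟩
end

section
/- Let E be the group with presentation ⟨t, u, v | t² = 1, u² = v², tut⁻¹ = u⁻¹, tv = vt, uv = vu⟩ (a 2-group of order 16). Let T, U, V : E → ℤ/2ℤ be the group homomorphisms determined by T(t) = 1, T(u) = T(v) = 0; U(u) = 1, U(t) = U(v) = 0; V(v) = 1, V(t) = V(u) = 0. Then TU + U² + V² = 0 in H²(E; 𝔽₂); explicitly, there exists a function F : E → ℤ/2ℤ such that T(g)U(h) + U(g)U(h) + V(g)V(h) = F(gh) + F(g) + F(h) for all g, h ∈ E. -/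
/-
`E` is itself the central extension of `𝔽₂³` by `𝔽₂` whose class is `TU + U² + V²`: it is the
group `𝔽₂³ × 𝔽₂` with `(a, m) (b, n) = (a + b, m + n + β a b)`, `β x y = x₀y₁ + x₁y₁ + x₂y₂`,
via `t, u, v ↦ (eᵢ, 0)` (so `u² = v² = (0, 1)` is the central element). A central extension
class always dies when pulled back to the extension itself: the fiber coordinate `F` of this
map satisfies `β (g, h) = F (g h) - F g - F h` by the very definition of the product.
-/

/-- The relators of the "almost extraspecial" 2-group
`E = ⟨t, u, v | t² = 1, u² = v², tut⁻¹ = u⁻¹, tv = vt, uv = vu⟩`,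
with generators `t = 0`, `u = 1`, `v = 2`. -/
def Erels : Set (FreeGroup (Fin 3)) :=
  { (FreeGroup.of 0) ^ 2,
    (FreeGroup.of 1) ^ 2 * ((FreeGroup.of 2) ^ 2)⁻¹,
    FreeGroup.of 0 * FreeGroup.of 1 * (FreeGroup.of 0)⁻¹ * FreeGroup.of 1,
    FreeGroup.of 0 * FreeGroup.of 2 * (FreeGroup.of 0)⁻¹ * (FreeGroup.of 2)⁻¹,
    FreeGroup.of 1 * FreeGroup.of 2 * (FreeGroup.of 1)⁻¹ * (FreeGroup.of 2)⁻¹ }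

/-- The central extension of `A` by `M` with the biadditive 2-cocycle `β`. -/
@[ext]
structure TwistedProd {A M : Type*} [AddCommGroup A] [AddCommGroup M] (β : A →+ A →+ M) where
  base : A
  fiber : M

namespace TwistedProd

variable {A M : Type*} [AddCommGroup A] [AddCommGroup M] {β : A →+ A →+ M}

instance : Mul (TwistedProd β) :=
  ⟨fun x y => ⟨x.base + y.base, x.fiber + y.fiber + β x.base y.base⟩⟩
instance : One (TwistedProd β) := ⟨⟨0, 0⟩⟩
instance : Inv (TwistedProd β) := ⟨fun x => ⟨-x.base, -x.fiber + β x.base x.base⟩⟩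

@[simp] lemma base_mul (x y : TwistedProd β) : (x * y).base = x.base + y.base := rfl
@[simp] lemma fiber_mul (x y : TwistedProd β) :
    (x * y).fiber = x.fiber + y.fiber + β x.base y.base := rfl
@[simp] lemma base_one : (1 : TwistedProd β).base = 0 := rfl
@[simp] lemma fiber_one : (1 : TwistedProd β).fiber = 0 := rfl
@[simp] lemma base_inv (x : TwistedProd β) : x⁻¹.base = -x.base := rfl
@[simp] lemma fiber_inv (x : TwistedProd β) : x⁻¹.fiber = -x.fiber + β x.base x.base := rfl

instance : Group (TwistedProd β) where
  mul_assoc x y z := by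
    ext <;> simp only [base_mul, fiber_mul, map_add, AddMonoidHom.add_apply] <;> abel
  one_mul x := by ext <;> simp
  mul_one x := by ext <;> simp
  inv_mul_cancel x := by ext <;> simp

def baseHom : TwistedProd β →* Multiplicative A where
  toFun x := Multiplicative.ofAdd x.base
  map_one' := rfl
  map_mul' _ _ := rfl

lemma apply_base_eq_fiber_mul_sub {G : Type*} [Group G] (φ : G →* TwistedProd β) (g h : G) :
    β (φ g).base (φ h).base = (φ (g * h)).fiber - (φ g).fiber - (φ h).fiber := by
  rw [map_mul, fiber_mul]; abel

end TwistedProd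

def cupForm : (Fin 3 → ZMod 2) →+ (Fin 3 → ZMod 2) →+ ZMod 2 :=
  AddMonoidHom.mk' (fun x => AddMonoidHom.mk' (fun y => x 0 * y 1 + x 1 * y 1 + x 2 * y 2)
    (by intros; simp only [Pi.add_apply]; ring))
    (fun _ _ => AddMonoidHom.ext fun _ => by
      simp only [Pi.add_apply, AddMonoidHom.mk'_apply, AddMonoidHom.add_apply]; ring)

@[simp] lemma cupForm_apply (x y : Fin 3 → ZMod 2) :
    cupForm x y = x 0 * y 1 + x 1 * y 1 + x 2 * y 2 := rfl

lemma lift_single_eq_one_of_mem_erels (r : FreeGroup (Fin 3)) (hr : r ∈ Erels) :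
    FreeGroup.lift (fun i => (⟨Pi.single i 1, 0⟩ : TwistedProd cupForm)) r = 1 := by
  rcases hr with rfl | rfl | rfl | rfl | rfl <;>
    simp [TwistedProd.ext_iff, pow_two, CharTwo.add_self_eq_zero]

def toTwistedProd : PresentedGroup Erels →* TwistedProd cupForm :=
  PresentedGroup.toGroup lift_single_eq_one_of_mem_erels

lemma toAdd_eq_base_toTwistedProd (T : PresentedGroup Erels →* Multiplicative (ZMod 2))
    (i : Fin 3)
    (hT : ∀ j, T (PresentedGroup.of j) = Multiplicative.ofAdd ((Pi.single j 1 : Fin 3 → ZMod 2) i))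
    (g : PresentedGroup Erels) :
    Multiplicative.toAdd (T g) = (toTwistedProd g).base i := by
  have : T = ((Pi.evalAddMonoidHom (fun _ => ZMod 2) i).toMultiplicative.comp
      TwistedProd.baseHom).comp toTwistedProd :=
    PresentedGroup.ext fun j => by simp [hT, toTwistedProd, TwistedProd.baseHom]
  rw [this]
  rfl

/-- in the almost extraspecial 2-group `E`, with `T, U, V : E → ℤ/2ℤ`
the homomorphisms dual to the generators `t, u, v`, the relation `TU + U² + V² = 0`
holds in `H²(E; 𝔽₂)`: the 2-cocycle `(g,h) ↦ T(g)U(h) + U(g)U(h) + V(g)V(h)` is a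
coboundary. -/
theorem stmt5 (T U V : PresentedGroup Erels →* Multiplicative (ZMod 2))
    (hT0 : T (PresentedGroup.of 0) = Multiplicative.ofAdd 1)
    (hT1 : T (PresentedGroup.of 1) = Multiplicative.ofAdd 0)
    (hT2 : T (PresentedGroup.of 2) = Multiplicative.ofAdd 0)
    (hU0 : U (PresentedGroup.of 0) = Multiplicative.ofAdd 0)
    (hU1 : U (PresentedGroup.of 1) = Multiplicative.ofAdd 1)
    (hU2 : U (PresentedGroup.of 2) = Multiplicative.ofAdd 0)
    (hV0 : V (PresentedGroup.of 0) = Multiplicative.ofAdd 0)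
    (hV1 : V (PresentedGroup.of 1) = Multiplicative.ofAdd 0)
    (hV2 : V (PresentedGroup.of 2) = Multiplicative.ofAdd 1) :
    ∃ F : PresentedGroup Erels → ZMod 2, ∀ g h : PresentedGroup Erels,
      Multiplicative.toAdd (T g) * Multiplicative.toAdd (U h) +
        Multiplicative.toAdd (U g) * Multiplicative.toAdd (U h) +
        Multiplicative.toAdd (V g) * Multiplicative.toAdd (V h) =
      F (g * h) + F g + F h := by
  have hT := toAdd_eq_base_toTwistedProd T 0 (by intro j; fin_cases j <;> simp [hT0, hT1, hT2])
  have hU := toAdd_eq_base_toTwistedProd U 1 (by intro j; fin_cases j <;> simp [hU0, hU1, hU2])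
  have hV := toAdd_eq_base_toTwistedProd V 2 (by intro j; fin_cases j <;> simp [hV0, hV1, hV2])
  refine ⟨fun g => (toTwistedProd g).fiber, fun g h => ?_⟩
  simp only [hT, hU, hV]
  rw [← cupForm_apply, TwistedProd.apply_base_eq_fiber_mul_sub]
  simp only [CharTwo.sub_eq_add]
end

section
/- Let k, m, n be integers with mn ≠ 0, and suppose the matrix P = ((2k+1, 2m), (2n, 2k+1)) lies in SL(2,ℤ), i.e. (2k+1)² − 4mn = 1. Then k(k+1) = mn, and there exist integers m₁, m₂, n₁, n₂ such that m = m₁m₂, n = n₁n₂, k = m₁n₁ and k + 1 = m₂n₂. -/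
/-!
The determinant condition `(2k+1)² - 4mn = 1` is `k(k+1) = mn`. In a decomposition monoid such
as `ℤ`, a divisor `a` of a product `m n` splits as `m₁ n₁` with `m₁ ∣ m` and `n₁ ∣ n`; cancelling
`m₁ n₁` from `a b = m n` then shows that the cofactors multiply to `b`.
-/

theorem exists_mul_mul_of_mul_eq_mul {α : Type*} [CommMonoidWithZero α] [IsCancelMulZero α]
    [DecompositionMonoid α] {a b m n : α} (h : a * b = m * n) :
    ∃ m₁ m₂ n₁ n₂, m = m₁ * m₂ ∧ n = n₁ * n₂ ∧ a = m₁ * n₁ ∧ b = m₂ * n₂ := by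
  rcases eq_or_ne a 0 with rfl | ha
  · rcases mul_eq_zero.mp (zero_mul b ▸ h).symm with rfl | rfl
    · exact ⟨0, b, n, 1, by simp, by simp, by simp, by simp⟩
    · exact ⟨m, 1, 0, b, by simp, by simp, by simp, by simp⟩
  obtain ⟨m₁, n₁, ⟨m₂, rfl⟩, ⟨n₂, rfl⟩, rfl⟩ := exists_dvd_and_dvd_of_dvd_mul (Dvd.intro b h)
  refine ⟨m₁, m₂, n₁, n₂, rfl, rfl, rfl, mul_left_cancel₀ ha ?_⟩
  rw [h, mul_mul_mul_comm]

theorem stmt8_general (k m n : ℤ)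
    (hdet : (Matrix.of !![2 * k + 1, 2 * m; 2 * n, 2 * k + 1]).det = 1) :
    k * (k + 1) = m * n ∧
      ∃ m₁ m₂ n₁ n₂ : ℤ, m = m₁ * m₂ ∧ n = n₁ * n₂ ∧ k = m₁ * n₁ ∧ k + 1 = m₂ * n₂ := by
  have hkm : k * (k + 1) = m * n := by
    have := (Matrix.det_fin_two_of (2 * k + 1) (2 * m) (2 * n) (2 * k + 1)).symm.trans hdet
    linarith
  exact ⟨hkm, exists_mul_mul_of_mul_eq_mul hkm⟩

/-- If `m n ≠ 0` and `P = ((2k+1, 2m), (2n, 2k+1)) ∈ SL(2,ℤ)`,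
then `k(k+1) = mn` and the factorization splits: `m = m₁m₂`, `n = n₁n₂`,
`k = m₁n₁`, `k + 1 = m₂n₂`. -/
theorem stmt8 (k m n : ℤ) (hmn : m * n ≠ 0)
    (hdet : (Matrix.of !![2 * k + 1, 2 * m; 2 * n, 2 * k + 1]).det = 1) :
    k * (k + 1) = m * n ∧
      ∃ m₁ m₂ n₁ n₂ : ℤ, m = m₁ * m₂ ∧ n = n₁ * n₂ ∧ k = m₁ * n₁ ∧ k + 1 = m₂ * n₂ :=
  stmt8_general k m n hdet
end

section
/- For an integer t, the following are equivalent: (i) there exist integers a, b, c, d with ad − bc = 1 or ad − bc = −1, abcd ≠ 0, and t = 2(ad − bc)(ad + bc); (ii) |t| > 2 and t ≡ 2 (mod 4). -/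
/-!
Writing `p = ad` and `q = bc`, the conditions only involve `p` and `q`, and every pair of
nonzero integers arises this way. Since `2(p - q)(p + q)` is invariant under `(p, q) ↦ (-p, -q)`
we may take `p - q = 1`, and then `t = 2(2q + 1) = 4q + 2`; the exclusions `p ≠ 0`, `q ≠ 0`
are exactly `t ≠ ±2`.
-/

theorem exists_mul_mul_mul_ne_zero_iff (P : ℤ → ℤ → Prop) :
    (∃ a b c d : ℤ, a * b * c * d ≠ 0 ∧ P (a * d) (b * c)) ↔
      ∃ p q : ℤ, p ≠ 0 ∧ q ≠ 0 ∧ P p q := by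
  constructor
  · rintro ⟨a, b, c, d, h0, hP⟩
    obtain ⟨⟨⟨ha, hb⟩, hc⟩, hd⟩ : ((a ≠ 0 ∧ b ≠ 0) ∧ c ≠ 0) ∧ d ≠ 0 := by
      simpa only [mul_ne_zero_iff] using h0
    exact ⟨_, _, mul_ne_zero ha hd, mul_ne_zero hb hc, hP⟩
  · rintro ⟨p, q, hp, hq, hP⟩
    exact ⟨p, q, 1, 1, by simpa using mul_ne_zero hp hq, by simpa using hP⟩

theorem exists_two_mul_sub_mul_add_eq_iff (t : ℤ) :
    (∃ p q : ℤ, p ≠ 0 ∧ q ≠ 0 ∧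
        (p - q = 1 ∨ p - q = -1) ∧ t = 2 * (p - q) * (p + q)) ↔
      ∃ q : ℤ, q ≠ 0 ∧ q ≠ -1 ∧ t = 4 * q + 2 := by
  constructor
  · rintro ⟨p, q, hp, hq, hpq | hpq, ht⟩
    · exact ⟨q, hq, by omega, by rw [ht, hpq, show p = q + 1 by omega]; ring⟩
    · exact ⟨-q, by omega, by omega, by rw [ht, hpq, show p = q - 1 by omega]; ring⟩
  · rintro ⟨q, hq, hq', ht⟩
    exact ⟨q + 1, q, by omega, hq, Or.inl (by ring), by rw [ht]; ring⟩

theorem Int.exists_eq_four_mul_add_two_iff (t : ℤ) :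
    (∃ q : ℤ, q ≠ 0 ∧ q ≠ -1 ∧ t = 4 * q + 2) ↔ 2 < |t| ∧ t ≡ 2 [ZMOD 4] := by
  rw [lt_abs, Int.ModEq]
  constructor
  · rintro ⟨q, hq, hq', rfl⟩
    omega
  · rintro ⟨ht, ht'⟩
    exact ⟨(t - 2) / 4, by omega, by omega, by omega⟩

/-- For an integer `t`, there exist integers `a, b, c, d` with
`ad − bc = ±1`, `abcd ≠ 0` and `t = 2(ad − bc)(ad + bc)` if and only if
`|t| > 2` and `t ≡ 2 (mod 4)`. -/
theorem stmt9 (t : ℤ) :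
    (∃ a b c d : ℤ, (a * d - b * c = 1 ∨ a * d - b * c = -1) ∧
        a * b * c * d ≠ 0 ∧ t = 2 * (a * d - b * c) * (a * d + b * c)) ↔
      (2 < |t| ∧ t ≡ 2 [ZMOD 4]) := by
  rw [← Int.exists_eq_four_mul_add_two_iff, ← exists_two_mul_sub_mul_add_eq_iff,
    ← exists_mul_mul_mul_ne_zero_iff
      fun p q ↦ (p - q = 1 ∨ p - q = -1) ∧ t = 2 * (p - q) * (p + q)]
  simp only [and_left_comm]
end

section
/- Let Θ = ((a, c), (b, d)) ∈ GL(2,ℤ) (so ad − bc = ±1), and let π_Θ = ℤ² ⋊_Θ ℤ be the semidirect product in which the generator of ℤ acts on ℤ² by Θ. Let Δ₁ = det(Θ − I₂) = (a−1)(d−1) − bc and let Δ₂ = gcd(a−1, b, c, d−1). If Δ₁ ≠ 0, then the abelianization of π_Θ is isomorphic to ℤ ⊕ ℤ/(|Δ₁|/Δ₂)ℤ ⊕ ℤ/Δ₂ℤ. -/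
/-- The additive automorphism of `ℤ²` given by a matrix `Θ ∈ GL(2,ℤ)`. -/
def thetaAddAut (Θ : GL (Fin 2) ℤ) : (Fin 2 → ℤ) ≃+ (Fin 2 → ℤ) where
  toFun v := (Θ : Matrix (Fin 2) (Fin 2) ℤ).mulVec v
  invFun v := (Θ⁻¹ : GL (Fin 2) ℤ).1.mulVec v
  left_inv v := by
    show (Θ⁻¹ : GL (Fin 2) ℤ).1.mulVec ((Θ : Matrix (Fin 2) (Fin 2) ℤ).mulVec v) = v
    rw [Matrix.mulVec_mulVec, ← Units.val_mul, inv_mul_cancel, Units.val_one, Matrix.one_mulVec]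
  right_inv v := by
    show (Θ : Matrix (Fin 2) (Fin 2) ℤ).mulVec ((Θ⁻¹ : GL (Fin 2) ℤ).1.mulVec v) = v
    rw [Matrix.mulVec_mulVec, ← Units.val_mul, mul_inv_cancel, Units.val_one, Matrix.one_mulVec]
  map_add' v w := by simpa using Matrix.mulVec_add (Θ : Matrix (Fin 2) (Fin 2) ℤ) v w

/-- `π_Θ = ℤ² ⋊_Θ ℤ`, the semidirect product in which the generator of `ℤ`
acts on `ℤ²` by the matrix `Θ`. -/
abbrev piTheta (Θ : GL (Fin 2) ℤ) : Type :=
  SemidirectProduct (Multiplicative (Fin 2 → ℤ)) (Multiplicative ℤ)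
    (zpowersHom (MulAut (Multiplicative (Fin 2 → ℤ)))
      (AddEquiv.toMultiplicative (thetaAddAut Θ)))

/-!
For an abelian group `N` and `e ∈ Aut N`, the commutator of the generator of `ℤ` with `v ∈ N`
in `N ⋊_e ℤ` is `e v - v`, and these are all the relations needed to abelianize:
`(N ⋊_e ℤ)^ab ≅ N/(e - 1)N × ℤ`. For `N = ℤ²` the group `ℤ²/(Θ - 1)ℤ²` is read off a Smith
normal form `diag(s, t)`, `s ∣ t`, of `Θ - 1`: the gcd of the entries and `|det|` are unchanged
by unimodular row and column operations, so `Δ₂ = |s|` and `|Δ₁| = |s t|`. The Smith form comes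
from a matrix in the equivalence class whose `(0, 0)` entry has least nonzero absolute value:
Bézout steps show that this entry divides its row and column, and, after clearing these, the
remaining diagonal entry too.
-/

open Multiplicative SemidirectProduct
open scoped commutatorElement

abbrev SemidirectInt {N : Type*} [AddCommGroup N] (e : N ≃+ N) : Type _ :=
  SemidirectProduct (Multiplicative N) (Multiplicative ℤ)
    (zpowersHom (MulAut (Multiplicative N)) (AddEquiv.toMultiplicative e))

namespace AddEquiv

variable {N : Type*} [AddCommGroup N] (e : N ≃+ N)

def coinvariantsKer : AddSubgroup N := (e.toAddMonoidHom - AddMonoidHom.id N).range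

lemma mk_coinvariantsKer_apply (v : N) : ((e v : N) : N ⧸ e.coinvariantsKer) = v :=
  QuotientAddGroup.eq.2 ⟨-v, by simp⟩

lemma mk_coinvariantsKer_zpow_apply (k : ℤ) (v : N) :
    ((toAdd ((e.toMultiplicative ^ k) (ofAdd v)) : N) : N ⧸ e.coinvariantsKer) = v := by
  induction k using Int.induction_on generalizing v with
  | zero => rfl
  | succ k ih =>
    rw [zpow_add_one, MulAut.mul_apply]
    exact (ih (e v)).trans (e.mk_coinvariantsKer_apply v)
  | pred k ih =>
    rw [zpow_sub_one, MulAut.mul_apply]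
    exact (ih (e.symm v)).trans (by simpa using (e.mk_coinvariantsKer_apply (e.symm v)).symm)

end AddEquiv

namespace SemidirectInt

variable {N : Type*} [AddCommGroup N] (e : N ≃+ N)

lemma commutatorElement_inr_inl (v : N) :
    ⁅(inr (ofAdd 1) : SemidirectInt e), inl (ofAdd v)⁆ =
      (inl (ofAdd (e v - v)) : SemidirectInt e) := by
  rw [commutatorElement_def, ← map_inv inr, ← inl_aut, ← map_inv inl, ← map_mul, sub_eq_add_neg]
  rfl

def toCoinvariantsProd :
    SemidirectInt e →* Multiplicative ((N ⧸ e.coinvariantsKer) × ℤ) :=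
  lift (AddMonoidHom.toMultiplicative ((QuotientAddGroup.mk' _).prod 0))
    (AddMonoidHom.toMultiplicative ((0 : ℤ →+ N ⧸ e.coinvariantsKer).prod (.id ℤ)))
    fun k ↦ MonoidHom.ext fun v ↦ by
      simp only [MonoidHom.comp_apply, MulEquiv.coe_toMonoidHom, MulAut.conj_apply,
        mul_inv_cancel_comm]
      exact congrArg ofAdd (Prod.ext (e.mk_coinvariantsKer_zpow_apply k.toAdd v.toAdd) rfl)

def ofCoinvariantsProd :
    Multiplicative ((N ⧸ e.coinvariantsKer) × ℤ) →* Abelianization (SemidirectInt e) :=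
  AddMonoidHom.toMultiplicativeLeft <|
    (QuotientAddGroup.lift _ (MonoidHom.toAdditiveRight (Abelianization.of.comp inl)) (by
      rintro _ ⟨v, rfl⟩
      change Abelianization.of (inl (ofAdd (e v - v))) = 1
      rw [← commutatorElement_inr_inl, map_commutatorElement,
        commutatorElement_eq_one_iff_mul_comm, mul_comm])).coprod
    (MonoidHom.toAdditiveRight (Abelianization.of.comp inr))

def abelianizationEquiv :
    Abelianization (SemidirectInt e) ≃* Multiplicative ((N ⧸ e.coinvariantsKer) × ℤ) :=
  MonoidHom.toMulEquiv (Abelianization.lift (toCoinvariantsProd e)) (ofCoinvariantsProd e)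
    (by
      refine Abelianization.hom_ext _ _ (hom_ext ?_ ?_) <;> refine MonoidHom.ext fun x ↦ ?_ <;>
        simp [ofCoinvariantsProd, toCoinvariantsProd])
    (by
      refine MonoidHom.ext fun x ↦ ?_
      induction x using Multiplicative.rec with | ofAdd x
      obtain ⟨q, k⟩ := x
      induction q using QuotientAddGroup.induction_on
      simp [ofCoinvariantsProd, toCoinvariantsProd, ← ofAdd_add])

end SemidirectInt

namespace Matrix

variable {n K : Type*} [Fintype n] [DecidableEq n] [CommRing K]

def Equivalent (R S : Matrix n n K) : Prop :=
  ∃ U V : GL n K, (U : Matrix n n K) * R * V = S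

namespace Equivalent

variable {R S T : Matrix n n K}

lemma refl (R : Matrix n n K) : Equivalent R R := ⟨1, 1, by simp⟩

lemma symm : Equivalent R S → Equivalent S R := by
  rintro ⟨U, V, rfl⟩
  exact ⟨U⁻¹, V⁻¹, by simp [Matrix.mul_assoc]⟩

lemma trans : Equivalent R S → Equivalent S T → Equivalent R T := by
  rintro ⟨U, V, rfl⟩ ⟨U', V', rfl⟩
  exact ⟨U' * U, V * V', by simp [Matrix.mul_assoc]⟩

lemma of_isUnit_det {U V : Matrix n n K} (hU : IsUnit U.det) (hV : IsUnit V.det) :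
    Equivalent R (U * R * V) :=
  ⟨nonsingInvUnit U hU, nonsingInvUnit V hV, rfl⟩

lemma dvd_apply {m : K} (h : Equivalent R S) (hR : ∀ i j, m ∣ R i j) (i j : n) :
    m ∣ S i j := by
  obtain ⟨U, V, rfl⟩ := h
  choose R' hR' using hR
  have hR : R = m • of R' := by ext i j; exact hR' i j
  rw [hR, Matrix.mul_smul, Matrix.smul_mul, smul_apply, smul_eq_mul]
  exact dvd_mul_right _ _

lemma associated_det (h : Equivalent R S) : Associated R.det S.det := by
  obtain ⟨U, V, rfl⟩ := h
  rw [det_mul, det_mul, mul_comm (U : Matrix n n K).det, mul_assoc]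
  exact ⟨GeneralLinearGroup.det U * GeneralLinearGroup.det V, by simp⟩

end Equivalent

abbrev cokernel (R : Matrix n n ℤ) : Type _ :=
  (n → ℤ) ⧸ (LinearMap.range R.mulVecLin).toAddSubgroup

lemma Equivalent.nonempty_cokernel_addEquiv {R S : Matrix n n ℤ} (h : Equivalent R S) :
    Nonempty (cokernel R ≃+ cokernel S) := by
  obtain ⟨U, V, rfl⟩ := h
  refine ⟨QuotientAddGroup.congr _ _
    (LinearMap.GeneralLinearGroup.generalLinearEquiv ℤ _ (GeneralLinearGroup.toLin U)).toAddEquiv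
    ?_⟩
  ext w
  change (∃ x, (∃ a, R *ᵥ a = x) ∧ (U : Matrix n n ℤ) *ᵥ x = w) ↔
      ∃ a, ((U : Matrix n n ℤ) * R * (V : Matrix n n ℤ)) *ᵥ a = w
  constructor
  · rintro ⟨_, ⟨a, rfl⟩, rfl⟩
    refine ⟨(↑V⁻¹ : Matrix n n ℤ) *ᵥ a, ?_⟩
    rw [mulVec_mulVec, mulVec_mulVec, Matrix.mul_assoc, ← Units.val_mul, mul_inv_cancel,
      Units.val_one, Matrix.mul_one]
  · rintro ⟨a, rfl⟩
    refine ⟨_, ⟨(V : Matrix n n ℤ) *ᵥ a, rfl⟩, ?_⟩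
    rw [mulVec_mulVec, mulVec_mulVec, Matrix.mul_assoc]

lemma mem_range_diagonal_iff (d v : n → ℤ) :
    v ∈ LinearMap.range (diagonal d).mulVecLin ↔ ∀ i, d i ∣ v i := by
  simp only [LinearMap.mem_range, mulVecLin_apply, funext_iff, mulVec_diagonal]
  exact ⟨fun ⟨w, hw⟩ i ↦ ⟨w i, (hw i).symm⟩,
    fun h ↦ ⟨fun i ↦ (h i).choose, fun i ↦ (h i).choose_spec.symm⟩⟩

lemma nonempty_cokernel_diagonal_addEquiv (d : n → ℤ) :
    Nonempty (cokernel (diagonal d) ≃+ ((i : n) → ZMod (d i).natAbs)) := by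
  let reduce : (n → ℤ) →+ ((i : n) → ZMod (d i).natAbs) :=
    AddMonoidHom.pi fun i ↦ (Int.castAddHom _).comp (Pi.evalAddMonoidHom _ i)
  have hsurj : Function.Surjective reduce := fun x ↦
    ⟨fun i ↦ (x i).cast, funext fun i ↦ ZMod.intCast_zmod_cast (x i)⟩
  have hker : (LinearMap.range (diagonal d).mulVecLin).toAddSubgroup = reduce.ker := by
    ext v
    rw [Submodule.mem_toAddSubgroup, mem_range_diagonal_iff, AddMonoidHom.mem_ker, funext_iff]
    simp [reduce, ZMod.intCast_zmod_eq_zero_iff_dvd]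
  exact ⟨(QuotientAddGroup.quotientAddEquivOfEq hker).trans
    (QuotientAddGroup.quotientKerEquivOfSurjective _ hsurj)⟩

lemma exists_det_eq_one_mul_add_mul_eq_gcd (p q : ℤ) :
    ∃ U : Matrix (Fin 2) (Fin 2) ℤ, U.det = 1 ∧ U 0 0 * p + U 0 1 * q = Int.gcd p q := by
  rcases eq_or_ne (Int.gcd p q) 0 with hg | hg
  · exact ⟨1, det_one, by simp [Int.gcd_eq_zero_iff.1 hg]⟩
  obtain ⟨p', hp⟩ := Int.gcd_dvd_left p q
  obtain ⟨q', hq⟩ := Int.gcd_dvd_right p q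
  have hbez := Int.gcd_eq_gcd_ab p q
  refine ⟨!![p.gcdA q, p.gcdB q; -q', p'], ?_, by simp [hbez, mul_comm]⟩
  rw [det_fin_two_of]
  refine mul_left_cancel₀ (Int.natCast_ne_zero.2 hg) ?_
  linear_combination -(p.gcdA q) * hp - (p.gcdB q) * hq - hbez

lemma exists_equivalent_apply_zero_zero_eq_gcd_col (R : Matrix (Fin 2) (Fin 2) ℤ) :
    ∃ S, Equivalent R S ∧ S 0 0 = Int.gcd (R 0 0) (R 1 0) := by
  obtain ⟨U, hU, hUR⟩ := exists_det_eq_one_mul_add_mul_eq_gcd (R 0 0) (R 1 0)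
  refine ⟨U * R * 1, .of_isUnit_det (hU ▸ isUnit_one) (by simp), ?_⟩
  simpa [mul_apply, Fin.sum_univ_two] using hUR

lemma exists_equivalent_apply_zero_zero_eq_gcd_row (R : Matrix (Fin 2) (Fin 2) ℤ) :
    ∃ S, Equivalent R S ∧ S 0 0 = Int.gcd (R 0 0) (R 0 1) := by
  obtain ⟨U, hU, hUR⟩ := exists_det_eq_one_mul_add_mul_eq_gcd (R 0 0) (R 0 1)
  refine ⟨1 * R * Uᵀ, .of_isUnit_det (by simp) (by simp [hU]), ?_⟩
  simpa [mul_apply, Fin.sum_univ_two, mul_comm] using hUR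

lemma exists_equivalent_apply_zero_zero_ne_zero {R : Matrix (Fin 2) (Fin 2) ℤ} (hR : R ≠ 0) :
    ∃ S, Equivalent R S ∧ S 0 0 ≠ 0 := by
  obtain ⟨i, j, hij⟩ : ∃ i j, R i j ≠ 0 := by
    by_contra! h
    exact hR (ext h)
  have h1 : IsUnit (1 : Matrix (Fin 2) (Fin 2) ℤ).det := by simp
  have hP : IsUnit (!![0, 1; 1, 0] : Matrix (Fin 2) (Fin 2) ℤ).det := by simp
  fin_cases i <;> fin_cases j
  · exact ⟨_, .of_isUnit_det h1 h1, by simpa using hij⟩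
  · exact ⟨_, .of_isUnit_det h1 hP, by simpa [mul_apply, vecMul, dotProduct] using hij⟩
  · exact ⟨_, .of_isUnit_det hP h1, by simpa [mul_apply, vecMul, dotProduct] using hij⟩
  · exact ⟨_, .of_isUnit_det hP hP, by simpa [mul_apply, vecMul, dotProduct] using hij⟩

lemma apply_zero_zero_dvd_of_minimal {S : Matrix (Fin 2) (Fin 2) ℤ} (hS : S 0 0 ≠ 0)
    (hmin : ∀ T, Equivalent S T → T 0 0 ≠ 0 → (S 0 0).natAbs ≤ (T 0 0).natAbs) :
    S 0 0 ∣ S 1 0 ∧ S 0 0 ∣ S 0 1 := by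
  have key (b : ℤ) (hb : ∃ T, Equivalent S T ∧ T 0 0 = Int.gcd (S 0 0) b) : S 0 0 ∣ b := by
    obtain ⟨T, hST, hT⟩ := hb
    have hg : Int.gcd (S 0 0) b ≠ 0 := fun h ↦ hS (Int.gcd_eq_zero_iff.1 h).1
    have hle := hmin T hST (by rw [hT]; exact_mod_cast hg)
    rw [hT, Int.natAbs_natCast] at hle
    exact Int.gcd_eq_natAbs_left_iff_dvd.1
      (le_antisymm (Nat.le_of_dvd (Int.natAbs_pos.2 hS) (Int.gcd_dvd_natAbs_left _ _)) hle)
  exact ⟨key _ (exists_equivalent_apply_zero_zero_eq_gcd_col S),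
    key _ (exists_equivalent_apply_zero_zero_eq_gcd_row S)⟩

theorem exists_equivalent_diagonal (R : Matrix (Fin 2) (Fin 2) ℤ) :
    ∃ s t : ℤ, s ∣ t ∧ Equivalent R (diagonal ![s, t]) := by
  rcases eq_or_ne R 0 with rfl | hR
  · exact ⟨0, 0, dvd_rfl, by convert Equivalent.refl (0 : Matrix (Fin 2) (Fin 2) ℤ); simp⟩
  classical
  have hex : ∃ m, ∃ S, Equivalent R S ∧ S 0 0 ≠ 0 ∧ (S 0 0).natAbs = m := by
    obtain ⟨S, hRS, hS⟩ := exists_equivalent_apply_zero_zero_ne_zero hR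
    exact ⟨_, S, hRS, hS, rfl⟩
  obtain ⟨S, hRS, hS, hSm⟩ := Nat.find_spec hex
  have hmin (T : Matrix (Fin 2) (Fin 2) ℤ) (hST : Equivalent S T) (hT : T 0 0 = S 0 0)
      (T' : Matrix (Fin 2) (Fin 2) ℤ) (hTT' : Equivalent T T') (hT' : T' 0 0 ≠ 0) :
      (T 0 0).natAbs ≤ (T' 0 0).natAbs :=
    hT ▸ hSm ▸ Nat.find_min' hex ⟨T', (hRS.trans hST).trans hTT', hT', rfl⟩
  obtain ⟨⟨y, hy⟩, ⟨x, hx⟩⟩ := apply_zero_zero_dvd_of_minimal hS (hmin S (.refl S) rfl)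
  set s := S 0 0
  set t := S 1 1 - y * s * x
  have hSD : Equivalent S (diagonal ![s, t]) := by
    convert Equivalent.of_isUnit_det (R := S) (U := !![1, 0; -y, 1]) (V := !![1, -x; 0, 1])
      (by simp) (by simp) using 1
    rw [eta_fin_two S]
    ext i j; fin_cases i <;> fin_cases j <;> simp [hx, hy, t] <;> ring
  -- Adding the second row to the first puts `t` next to `s`, where minimality applies again.
  have hST : Equivalent S !![s, t; 0, t] := by
    refine hSD.trans ?_
    convert Equivalent.of_isUnit_det (R := diagonal ![s, t]) (U := !![1, 1; 0, 1]) (V := 1)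
      (by simp) (by simp) using 1
    ext i j; fin_cases i <;> fin_cases j <;> simp [vecMul, dotProduct]
  have hst := (apply_zero_zero_dvd_of_minimal (S := !![s, t; 0, t]) hS (hmin _ hST rfl)).2
  exact ⟨s, t, by simpa using hst, hRS.trans hSD⟩

def entryGcd (R : Matrix (Fin 2) (Fin 2) ℤ) : ℕ :=
  Nat.gcd (Int.gcd (R 0 0) (R 1 0)) (Int.gcd (R 0 1) (R 1 1))

lemma dvd_entryGcd_iff {R : Matrix (Fin 2) (Fin 2) ℤ} {m : ℤ} :
    m ∣ entryGcd R ↔ ∀ i j, m ∣ R i j := by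
  simp only [entryGcd, Int.dvd_natCast, Nat.dvd_gcd_iff, Int.dvd_gcd_iff, Int.natAbs_dvd,
    Fin.forall_fin_two]
  tauto

lemma Equivalent.entryGcd_eq {R S : Matrix (Fin 2) (Fin 2) ℤ} (h : Equivalent R S) :
    entryGcd R = entryGcd S := by
  have key {R S : Matrix (Fin 2) (Fin 2) ℤ} (h : Equivalent R S) : entryGcd R ∣ entryGcd S :=
    Int.natCast_dvd_natCast.1 (dvd_entryGcd_iff.2 (h.dvd_apply (dvd_entryGcd_iff.1 dvd_rfl)))
  exact Nat.dvd_antisymm (key h) (key h.symm)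

lemma entryGcd_diagonal {s t : ℤ} (hst : s ∣ t) : entryGcd (diagonal ![s, t]) = s.natAbs := by
  simpa [entryGcd] using Nat.gcd_eq_left (Int.natAbs_dvd_natAbs.2 hst)

/-- With `0 / 0 = 0` and `ZMod 0 = ℤ` this is also right for singular `R`. -/
theorem nonempty_cokernel_addEquiv_zmod (R : Matrix (Fin 2) (Fin 2) ℤ) :
    Nonempty (cokernel R ≃+ ZMod (R.det.natAbs / entryGcd R) × ZMod (entryGcd R)) := by
  obtain ⟨s, t, hst, hR⟩ := exists_equivalent_diagonal R
  have hg : entryGcd R = s.natAbs := hR.entryGcd_eq.trans (entryGcd_diagonal hst)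
  have hdet : R.det.natAbs / entryGcd R = t.natAbs := by
    rw [Int.associated_iff_natAbs.1 hR.associated_det, hg, diagonal_fin_two, det_fin_two_of]
    rcases eq_or_ne s 0 with rfl | hs
    · simp [zero_dvd_iff.1 hst]
    · simp [Int.natAbs_mul, hs]
  obtain ⟨e₁⟩ := hR.nonempty_cokernel_addEquiv
  obtain ⟨e₂⟩ := nonempty_cokernel_diagonal_addEquiv ![s, t]
  rw [hdet, hg]
  exact ⟨e₁.trans (e₂.trans ((LinearEquiv.piFinTwo ℤ _).toAddEquiv.trans AddEquiv.prodComm))⟩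

end Matrix

lemma coinvariantsKer_thetaAddAut (Θ : GL (Fin 2) ℤ) :
    (thetaAddAut Θ).coinvariantsKer =
      (LinearMap.range ((Θ : Matrix (Fin 2) (Fin 2) ℤ) - 1).mulVecLin).toAddSubgroup := by
  ext v
  simp [AddEquiv.coinvariantsKer, thetaAddAut]

theorem stmt11_general (Θ : GL (Fin 2) ℤ) (a b c d : ℤ)
    (ha : (Θ : Matrix (Fin 2) (Fin 2) ℤ) 0 0 = a)
    (hc : (Θ : Matrix (Fin 2) (Fin 2) ℤ) 0 1 = c)
    (hb : (Θ : Matrix (Fin 2) (Fin 2) ℤ) 1 0 = b)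
    (hd : (Θ : Matrix (Fin 2) (Fin 2) ℤ) 1 1 = d) :
    Nonempty (Abelianization (piTheta Θ) ≃*
      Multiplicative (ℤ ×
        ZMod (((a - 1) * (d - 1) - b * c).natAbs /
          Nat.gcd (Int.gcd (a - 1) b) (Int.gcd c (d - 1))) ×
        ZMod (Nat.gcd (Int.gcd (a - 1) b) (Int.gcd c (d - 1))))) := by
  set M := (Θ : Matrix (Fin 2) (Fin 2) ℤ) - 1
  have hM : M = !![a - 1, c; b, d - 1] := by
    ext i j; fin_cases i <;> fin_cases j <;> simp [M, ha, hb, hc, hd]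
  have hdet : M.det = (a - 1) * (d - 1) - b * c := by rw [hM, Matrix.det_fin_two_of]; ring
  have hgcd : M.entryGcd = Nat.gcd (Int.gcd (a - 1) b) (Int.gcd c (d - 1)) := by rw [hM]; rfl
  obtain ⟨e⟩ := M.nonempty_cokernel_addEquiv_zmod
  rw [← hdet, ← hgcd]
  exact ⟨(SemidirectInt.abelianizationEquiv (thetaAddAut Θ)).trans <| AddEquiv.toMultiplicative <|
    (((QuotientAddGroup.quotientAddEquivOfEq (coinvariantsKer_thetaAddAut Θ)).trans e).prodCongr
      (.refl ℤ)).trans AddEquiv.prodComm⟩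

/-- for `Θ = ((a, c), (b, d)) ∈ GL(2,ℤ)`, with
`Δ₁ = det(Θ − I₂) = (a−1)(d−1) − bc ≠ 0` and `Δ₂ = gcd(a−1, b, c, d−1)`,
the abelianization of `π_Θ = ℤ² ⋊_Θ ℤ` is `ℤ ⊕ ℤ/(|Δ₁|/Δ₂)ℤ ⊕ ℤ/Δ₂ℤ`. -/
theorem stmt11 (Θ : GL (Fin 2) ℤ) (a b c d : ℤ)
    (ha : (Θ : Matrix (Fin 2) (Fin 2) ℤ) 0 0 = a)
    (hc : (Θ : Matrix (Fin 2) (Fin 2) ℤ) 0 1 = c)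
    (hb : (Θ : Matrix (Fin 2) (Fin 2) ℤ) 1 0 = b)
    (hd : (Θ : Matrix (Fin 2) (Fin 2) ℤ) 1 1 = d)
    (hΔ₁ : (a - 1) * (d - 1) - b * c ≠ 0) :
    Nonempty (Abelianization (piTheta Θ) ≃*
      Multiplicative (ℤ ×
        ZMod (((a - 1) * (d - 1) - b * c).natAbs /
          Nat.gcd (Int.gcd (a - 1) b) (Int.gcd c (d - 1))) ×
        ZMod (Nat.gcd (Int.gcd (a - 1) b) (Int.gcd c (d - 1))))) :=
  stmt11_general Θ a b c d ha hc hb hd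
end
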